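/- arXiv:2311.02696 — 5 statements merged into one kernel-verified Lean document; each statement's English description precedes it below -/
import Mathlib

section
/- The function $b(x) = \log|x|$ belongs to $BMO^A(\mathbb{R}^n)$ for every invertible matrix $A$: there exists a constant $C = C(A, n) > 0$ such that for every ball $B(x,R) \subset \mathbb{R}^n$, $|\fint_{B(x,R)} \log|y|\,dy - \fint_{A(B(x,R))} \log|y|\,dy| \leq C$. -/
open MeasureTheory Metric Set

/-!
A linear isomorphism `A` distorts norms by at most the factors `‖A‖` and `‖A⁻¹‖`, so
`log ‖A y‖ - log ‖y‖` is bounded uniformly in `y`. A linear change of variables turns the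
average of `log ‖·‖` over `A(B)` into the average of `log ‖A ·‖` over `B`, and the averages
over one set of two functions whose difference is bounded by `M` differ by at most `M`.
-/

section AverageBound

variable {α : Type*} [MeasurableSpace α] {μ : Measure α} [IsFiniteMeasure μ]

theorem abs_average_le_of_abs_le {f : α → ℝ} {C : ℝ} (hC : 0 ≤ C)
    (hf : ∀ᵐ x ∂μ, |f x| ≤ C) : |⨍ x, f x ∂μ| ≤ C := by
  rw [average_eq, smul_eq_mul, abs_mul, abs_inv, abs_of_nonneg measureReal_nonneg]
  rcases eq_or_lt_of_le (measureReal_nonneg (μ := μ) (s := univ)) with hμ | hμ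
  · simp [← hμ, hC]
  · rw [inv_mul_le_iff₀ hμ, mul_comm]
    exact (norm_integral_le_of_norm_le_const (C := C) hf : ‖∫ x, f x ∂μ‖ ≤ _)

/-- Without integrability, `⨍` takes the junk value `0`; the bound still holds because `f` and
`g` are then simultaneously non-integrable. -/
theorem abs_average_sub_average_le {f g : α → ℝ} {C : ℝ} (hC : 0 ≤ C)
    (hfg : AEStronglyMeasurable (fun x => f x - g x) μ) (hbound : ∀ᵐ x ∂μ, |f x - g x| ≤ C) :
    |⨍ x, f x ∂μ - ⨍ x, g x ∂μ| ≤ C := by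
  have hdiff : Integrable (fun x => f x - g x) μ := Integrable.of_bound hfg C hbound
  by_cases hf : Integrable f μ
  · have hg : Integrable g μ := (hf.sub hdiff).congr (.of_forall fun x => sub_sub_cancel _ _)
    rw [average_eq, average_eq, ← smul_sub, ← integral_sub hf hg, ← average_eq]
    exact abs_average_le_of_abs_le hC hbound
  · have hg : ¬ Integrable g μ := fun hg =>
      hf ((hdiff.add hg).congr (.of_forall fun x => sub_add_cancel _ _))
    simp [average_eq, integral_undef hf, integral_undef hg, hC]

end AverageBound

section LinearChangeOfVariables

variable {E F : Type*} [NormedAddCommGroup E] [NormedSpace ℝ E] [FiniteDimensional ℝ E]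
  [MeasurableSpace E] [BorelSpace E] (μ : Measure E) [μ.IsAddHaarMeasure]
  [NormedAddCommGroup F] [NormedSpace ℝ F]

theorem setAverage_image_continuousLinearEquiv (A : E ≃L[ℝ] E) {s : Set E}
    (hs : MeasurableSet s) (f : E → F) :
    ⨍ y in A '' s, f y ∂μ = ⨍ y in s, f (A y) ∂μ := by
  have hdet : LinearMap.det (A : E →ₗ[ℝ] E) ≠ 0 := (LinearEquiv.isUnit_det' _).ne_zero
  rw [setAverage_eq, setAverage_eq, integral_image_eq_integral_abs_det_fderiv_smul μ hs
      (fun y _ => A.hasFDerivAt.hasFDerivWithinAt) A.injective.injOn, integral_smul,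
    smul_smul, measureReal_def, measureReal_def, μ.addHaar_image_continuousLinearEquiv,
    ENNReal.toReal_mul, ENNReal.toReal_ofReal (abs_nonneg _), mul_inv, mul_right_comm]
  congr 2
  exact (mul_assoc _ _ _).trans (inv_mul_cancel_left₀ (abs_ne_zero.2 hdet) _)

end LinearChangeOfVariables

section LogNorm

variable {𝕜 E F : Type*} [NontriviallyNormedField 𝕜] [NormedAddCommGroup E] [NormedSpace 𝕜 E]
  [NormedAddCommGroup F] [NormedSpace 𝕜 F]

theorem ContinuousLinearMap.log_norm_apply_le (f : E →L[𝕜] F) {y : E} (hy : f y ≠ 0) :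
    Real.log ‖f y‖ ≤ Real.log ‖f‖ + Real.log ‖y‖ := by
  have hy₀ : y ≠ 0 := by rintro rfl; exact hy (map_zero f)
  have hf₀ : f ≠ 0 := by rintro rfl; exact hy rfl
  rw [← Real.log_mul (norm_ne_zero_iff.2 hf₀) (norm_ne_zero_iff.2 hy₀)]
  exact Real.log_le_log (norm_pos_iff.2 hy) (f.le_opNorm y)

theorem ContinuousLinearEquiv.abs_log_norm_apply_sub_log_norm_le (A : E ≃L[𝕜] F) (y : E) :
    |Real.log ‖A y‖ - Real.log ‖y‖| ≤
      |Real.log ‖(A : E →L[𝕜] F)‖| + |Real.log ‖(A.symm : F →L[𝕜] E)‖| := by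
  rcases eq_or_ne y 0 with rfl | hy
  · simp only [map_zero, norm_zero, Real.log_zero, sub_zero, abs_zero]
    positivity
  have hAy : A y ≠ 0 := (map_ne_zero_iff A A.injective).2 hy
  have hforward := (A : E →L[𝕜] F).log_norm_apply_le hAy
  have hbackward := (A.symm : F →L[𝕜] E).log_norm_apply_le (y := A y) (by simpa using hy)
  simp only [ContinuousLinearEquiv.coe_coe, ContinuousLinearEquiv.symm_apply_apply]
    at hforward hbackward
  rw [abs_le]
  constructor <;> linarith [le_abs_self (Real.log ‖(A : E →L[𝕜] F)‖),
    le_abs_self (Real.log ‖(A.symm : F →L[𝕜] E)‖), abs_nonneg (Real.log ‖(A : E →L[𝕜] F)‖),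
    abs_nonneg (Real.log ‖(A.symm : F →L[𝕜] E)‖)]

end LogNorm

/-- The function `log ‖x‖` belongs to `BMO^A(ℝⁿ)` for every invertible matrix `A`. -/
theorem log_mem_BMOA {n : ℕ}
    (A : EuclideanSpace ℝ (Fin n) ≃L[ℝ] EuclideanSpace ℝ (Fin n)) :
    ∃ C : ℝ, 0 < C ∧ ∀ (x : EuclideanSpace ℝ (Fin n)) (R : ℝ), 0 < R →
      |(⨍ y in ball x R, Real.log ‖y‖) - ⨍ y in (⇑A '' ball x R), Real.log ‖y‖| ≤ C := by
  set C := |Real.log ‖(A : EuclideanSpace ℝ (Fin n) →L[ℝ] EuclideanSpace ℝ (Fin n))‖| +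
    |Real.log ‖(A.symm : EuclideanSpace ℝ (Fin n) →L[ℝ] EuclideanSpace ℝ (Fin n))‖|
  refine ⟨C + 1, by positivity, fun x R _ => ?_⟩
  have : IsFiniteMeasure (volume.restrict (ball x R)) :=
    isFiniteMeasure_restrict.2 measure_ball_lt_top.ne
  rw [setAverage_image_continuousLinearEquiv volume A measurableSet_ball, abs_sub_comm]
  have hmeas : AEStronglyMeasurable (fun y => Real.log ‖A y‖ - Real.log ‖y‖)
      (volume.restrict (ball x R)) := Measurable.aestronglyMeasurable (by fun_prop)
  calc _ ≤ C := abs_average_sub_average_le (by positivity) hmeas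
          (ae_of_all _ A.abs_log_norm_apply_sub_log_norm_le)
    _ ≤ C + 1 := le_add_of_nonneg_right zero_le_one
end

section
/- Let $A$ be an invertible matrix and $b \in BMO(\mathbb{R}^n)$. Then $b \in BMO^A(\mathbb{R}^n)$ if and only if $\sup_{x \in \mathbb{R}^n, R > 0} |\fint_{B(x,R)} b - \fint_{B(Ax,R)} b| < \infty$. -/
/-!
Both `A(B(x,R))` and `B(Ax,R)` lie in the ball `B(Ax,KR)` with `K = ‖A‖ + 1`, and each fills a
fixed proportion of its volume (`|det A| / K^n`, resp. `1 / K^n`). The average of `b` over a set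
filling a proportion `θ` of a ball differs from the average over the ball by at most `θ⁻¹` times
the mean oscillation on that ball. Hence the averages of `b` over `A(B(x,R))` and `B(Ax,R)`
differ by `O(‖b‖_BMO)` uniformly in `x` and `R`, and either supremum is finite iff the other is.
-/

open MeasureTheory Metric Set Module
open scoped ENNReal

theorem ContinuousLinearMap.image_ball_subset_ball {E F : Type*} [NormedAddCommGroup E]
    [NormedSpace ℝ E] [NormedAddCommGroup F] [NormedSpace ℝ F] (A : E →L[ℝ] F) (x : E) (r : ℝ) :
    A '' ball x r ⊆ ball (A x) ((‖A‖ + 1) * r) := by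
  have hA : LipschitzWith (‖A‖₊ + 1) A := A.lipschitz.weaken le_self_add
  simpa using (hA.mapsTo_ball (by positivity) x r).image_subset

namespace MeasureTheory

theorem abs_setAverage_sub_setAverage_le_of_subset {α : Type*} [MeasurableSpace α]
    {μ : Measure α} {f : α → ℝ} {S B : Set α} (hf : IntegrableOn f B μ) (hSB : S ⊆ B)
    (hS : 0 < μ S) (hB : μ B ≠ ∞) :
    |(⨍ y in S, f y ∂μ) - ⨍ y in B, f y ∂μ| ≤
      μ.real B / μ.real S * ⨍ y in B, |f y - ⨍ z in B, f z ∂μ| ∂μ := by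
  set m := ⨍ z in B, f z ∂μ
  have hS_fin : μ S ≠ ∞ := ne_top_of_le_ne_top hB (measure_mono hSB)
  have hS_pos : 0 < μ.real S := ENNReal.toReal_pos hS.ne' hS_fin
  have hB_pos : 0 < μ.real B :=
    ENNReal.toReal_pos (hS.trans_le (measure_mono hSB)).ne' hB
  have hf_sub : IntegrableOn (fun y => f y - m) B μ := hf.sub (integrableOn_const hB)
  have h_avg_sub : (⨍ y in S, f y ∂μ) - m = (μ.real S)⁻¹ * ∫ y in S, (f y - m) ∂μ := by
    rw [integral_sub (hf.mono_set hSB) (integrableOn_const hS_fin), setIntegral_const,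
      setAverage_eq, smul_eq_mul, smul_eq_mul]
    field_simp
  calc |(⨍ y in S, f y ∂μ) - m| = (μ.real S)⁻¹ * |∫ y in S, (f y - m) ∂μ| := by
        rw [h_avg_sub, abs_mul, abs_of_pos (inv_pos.2 hS_pos)]
    _ ≤ (μ.real S)⁻¹ * ∫ y in B, |f y - m| ∂μ := by
        gcongr
        exact (abs_integral_le_integral_abs).trans <| setIntegral_mono_set hf_sub.abs
          (.of_forall fun _ => abs_nonneg _) hSB.eventuallyLE
    _ = μ.real B / μ.real S * ⨍ y in B, |f y - m| ∂μ := by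
        rw [setAverage_eq, smul_eq_mul]
        field_simp

section AddHaar

variable {E : Type*} [NormedAddCommGroup E] [NormedSpace ℝ E] [FiniteDimensional ℝ E]
  [MeasurableSpace E] [BorelSpace E] (μ : Measure E) [μ.IsAddHaarMeasure]

theorem measureReal_ball_mul_div_measureReal_ball (c x : E) {K r : ℝ} (hK : 0 < K)
    (hr : 0 < r) : μ.real (ball c (K * r)) / μ.real (ball x r) = K ^ finrank ℝ E := by
  have h_ball : 0 < μ.real (ball (0 : E) r) :=
    ENNReal.toReal_pos (measure_ball_pos μ 0 hr).ne' measure_ball_lt_top.ne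
  rw [measureReal_def, Measure.addHaar_ball_mul_of_pos μ c hK, ENNReal.toReal_mul,
    ENNReal.toReal_ofReal (by positivity), ← measureReal_def,
    Measure.addHaar_real_ball_center μ x, mul_div_cancel_right₀ _ h_ball.ne']

theorem measureReal_ball_mul_div_measureReal_image_ball (A : E ≃L[ℝ] E) (c x : E) {K r : ℝ}
    (hK : 0 < K) (hr : 0 < r) :
    μ.real (ball c (K * r)) / μ.real (A '' ball x r) =
      K ^ finrank ℝ E / |LinearMap.det (A : E →ₗ[ℝ] E)| := by
  rw [measureReal_def, measureReal_def, Measure.addHaar_image_continuousLinearEquiv,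
    ENNReal.toReal_mul, ENNReal.toReal_ofReal (abs_nonneg _), ← measureReal_def,
    ← measureReal_def, div_mul_eq_div_div_swap,
    measureReal_ball_mul_div_measureReal_ball μ c x hK hr]

theorem exists_forall_abs_setAverage_image_ball_sub_setAverage_ball_le (A : E ≃L[ℝ] E)
    {f : E → ℝ} (hf : LocallyIntegrable f μ) {M : ℝ}
    (hM : ∀ x R, 0 < R → ⨍ y in ball x R, |f y - ⨍ z in ball x R, f z ∂μ| ∂μ ≤ M) :
    ∃ D, ∀ x R, 0 < R →
      |(⨍ y in A '' ball x R, f y ∂μ) - ⨍ y in ball (A x) R, f y ∂μ| ≤ D := by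
  set K := ‖(A : E →L[ℝ] E)‖ + 1
  set N := finrank ℝ E
  set d := |LinearMap.det (A : E →ₗ[ℝ] E)|
  refine ⟨(K ^ N / d + K ^ N) * M, fun x R hR => ?_⟩
  have hK : 0 < K := by positivity
  set B := ball (A x) (K * R)
  have hfB : IntegrableOn f B μ :=
    (hf.integrableOn_isCompact (isCompact_closedBall _ _)).mono_set ball_subset_closedBall
  have hB : μ B ≠ ∞ := measure_ball_lt_top.ne
  have hA_sub : A '' ball x R ⊆ B := (A : E →L[ℝ] E).image_ball_subset_ball x R
  have hA_pos : 0 < μ (A '' ball x R) :=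
    (A.toHomeomorph.isOpenMap _ isOpen_ball).measure_pos μ
      ⟨A x, mem_image_of_mem _ (mem_ball_self hR)⟩
  have h_sub : ball (A x) R ⊆ B := ball_subset_ball (le_mul_of_one_le_left hR.le (by simp [K]))
  have h_osc := hM (A x) (K * R) (mul_pos hK hR)
  have h_image : |(⨍ y in A '' ball x R, f y ∂μ) - ⨍ y in B, f y ∂μ| ≤ K ^ N / d * M := by
    refine (abs_setAverage_sub_setAverage_le_of_subset hfB hA_sub hA_pos hB).trans ?_
    rw [measureReal_ball_mul_div_measureReal_image_ball μ A _ _ hK hR]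
    gcongr
  have h_ball : |(⨍ y in B, f y ∂μ) - ⨍ y in ball (A x) R, f y ∂μ| ≤ K ^ N * M := by
    rw [abs_sub_comm]
    refine (abs_setAverage_sub_setAverage_le_of_subset hfB h_sub
      (measure_ball_pos μ _ hR) hB).trans ?_
    rw [measureReal_ball_mul_div_measureReal_ball μ _ _ hK hR]
    gcongr
  exact ((abs_sub_le _ _ _).trans (add_le_add h_image h_ball)).trans_eq (by ring)

end AddHaar

end MeasureTheory

/-- Equivalent characterization of `BMO^A(ℝⁿ)`: a BMO function `b` satisfies
`sup_B |⨍_B b - ⨍_{A(B)} b| < ∞` iff `sup_{x,R} |⨍_{B(x,R)} b - ⨍_{B(Ax,R)} b| < ∞`. -/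
theorem BMOA_iff_translated_balls {n : ℕ}
    (A : EuclideanSpace ℝ (Fin n) ≃L[ℝ] EuclideanSpace ℝ (Fin n))
    (b : EuclideanSpace ℝ (Fin n) → ℝ) (hb : LocallyIntegrable b volume)
    (M : ℝ) (hM : ∀ (x : EuclideanSpace ℝ (Fin n)) (R : ℝ), 0 < R →
      (⨍ y in ball x R, |b y - ⨍ z in ball x R, b z|) ≤ M) :
    (∃ C : ℝ, ∀ (x : EuclideanSpace ℝ (Fin n)) (R : ℝ), 0 < R →
        |(⨍ y in ball x R, b y) - ⨍ y in (⇑A '' ball x R), b y| ≤ C) ↔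
    (∃ C : ℝ, ∀ (x : EuclideanSpace ℝ (Fin n)) (R : ℝ), 0 < R →
        |(⨍ y in ball x R, b y) - ⨍ y in ball (A x) R, b y| ≤ C) := by
  obtain ⟨D, hD⟩ := exists_forall_abs_setAverage_image_ball_sub_setAverage_ball_le volume A hb hM
  constructor <;> rintro ⟨C, hC⟩ <;> refine ⟨C + D, fun x R hR => ?_⟩
  · exact (abs_sub_le _ _ _).trans (add_le_add (hC x R hR) (hD x R hR))
  · exact (abs_sub_le _ _ _).trans
      (add_le_add (hC x R hR) ((abs_sub_comm _ _).trans_le (hD x R hR)))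
end

section
/- Let $A$ be an invertible matrix and suppose $b \in BMO^A(\mathbb{R}^n)$. If $z \in \mathbb{R}^n$ is a critical point of $b$, then $Az$ is also a critical point of $b$. (Consequently, either $b$ has no critical points, or $0$ is its only critical point, or together with any nonzero critical point $z$, all points $A^j z$, $j \geq 1$, are critical points.) -/
/-!
Put `a = ‖A‖` and `a' = ‖A⁻¹‖`. A ball `B = B(y, r)` close to `z` with a large average of `b`
is mapped onto a set with `B(Ay, r / a') ⊆ A(B) ⊆ B(Ay, a r)`. The `BMO^A` condition moves the
average over `B` by at most `C` when passing to `A(B)`, and since the two balls around `Ay` have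
volume ratio `(a a')ⁿ`, the `BMO` condition moves it by at most `2 (a a')ⁿ M` more when passing to
the small ball `B(Ay, r / a')`, which lies close to `Az`.
-/

open MeasureTheory Metric Set

section Oscillation

variable {α : Type*} [MeasurableSpace α] {μ : Measure α} {b : α → ℝ} {s s' t : Set α}

theorem measureReal_mul_abs_setAverage_sub_le (hst : s ⊆ t) (ht : μ t ≠ ⊤)
    (hb : IntegrableOn b t μ) :
    μ.real s * |(⨍ x in s, b x ∂μ) - ⨍ x in t, b x ∂μ| ≤
      μ.real t * ⨍ x in t, |b x - ⨍ y in t, b y ∂μ| ∂μ := by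
  set m := ⨍ x in t, b x ∂μ
  have hs : μ s ≠ ⊤ := ne_top_of_le_ne_top ht (measure_mono hst)
  calc μ.real s * |(⨍ x in s, b x ∂μ) - m|
      = |∫ x in s, (b x - m) ∂μ| := by
        rw [integral_sub (hb.mono_set hst) (integrableOn_const hs), setIntegral_const,
          ← measure_smul_setAverage _ hs, smul_eq_mul, smul_eq_mul, ← mul_sub, abs_mul,
          abs_of_nonneg measureReal_nonneg]
    _ ≤ ∫ x in s, |b x - m| ∂μ := abs_integral_le_integral_abs
    _ ≤ ∫ x in t, |b x - m| ∂μ :=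
        setIntegral_mono_set (hb.sub (integrableOn_const ht)).abs
          (ae_of_all _ fun _ => abs_nonneg _) hst.eventuallyLE
    _ = μ.real t * ⨍ x in t, |b x - m| ∂μ := (measure_smul_setAverage _ ht).symm

theorem abs_setAverage_sub_setAverage_le (hst : s ⊆ t) (ht : μ t ≠ ⊤)
    (hb : IntegrableOn b t μ) (hs : 0 < μ.real s) {K M : ℝ} (hK : μ.real t ≤ K * μ.real s)
    (hM : ⨍ x in t, |b x - ⨍ y in t, b y ∂μ| ∂μ ≤ M) :
    |(⨍ x in s, b x ∂μ) - ⨍ x in t, b x ∂μ| ≤ K * M := by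
  have hosc : 0 ≤ ⨍ x in t, |b x - ⨍ y in t, b y ∂μ| ∂μ := by
    rw [setAverage_eq]
    exact smul_nonneg (inv_nonneg.2 measureReal_nonneg) (integral_nonneg fun _ => abs_nonneg _)
  refine le_of_mul_le_mul_left ?_ hs
  calc μ.real s * |(⨍ x in s, b x ∂μ) - ⨍ x in t, b x ∂μ|
      ≤ μ.real t * ⨍ x in t, |b x - ⨍ y in t, b y ∂μ| ∂μ :=
        measureReal_mul_abs_setAverage_sub_le hst ht hb
    _ ≤ K * μ.real s * M := mul_le_mul hK hM hosc (measureReal_nonneg.trans hK)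
    _ = μ.real s * (K * M) := by ring

theorem abs_setAverage_sub_setAverage_le_of_subset_of_subset (hss' : s ⊆ s') (hs't : s' ⊆ t)
    (ht : μ t ≠ ⊤) (hb : IntegrableOn b t μ) (hs : 0 < μ.real s) {K M : ℝ}
    (hK : μ.real t ≤ K * μ.real s) (hM : ⨍ x in t, |b x - ⨍ y in t, b y ∂μ| ∂μ ≤ M) :
    |(⨍ x in s', b x ∂μ) - ⨍ x in s, b x ∂μ| ≤ 2 * (K * M) := by
  have hss : μ.real s ≤ μ.real s' :=
    measureReal_mono hss' (ne_top_of_le_ne_top ht (measure_mono hs't))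
  have hK0 : 0 ≤ K :=
    le_of_mul_le_mul_right ((zero_mul _).trans_le (measureReal_nonneg.trans hK)) hs
  have hK' : μ.real t ≤ K * μ.real s' := hK.trans (mul_le_mul_of_nonneg_left hss hK0)
  have h := abs_setAverage_sub_setAverage_le (hss'.trans hs't) ht hb hs hK hM
  have h' := abs_setAverage_sub_setAverage_le hs't ht hb (hs.trans_le hss) hK' hM
  rw [abs_le] at h h' ⊢
  constructor <;> linarith [h.1, h.2, h'.1, h'.2]

end Oscillation

namespace ContinuousLinearEquiv

variable {𝕜 E F : Type*} [NontriviallyNormedField 𝕜] [NormedAddCommGroup E] [NormedSpace 𝕜 E]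
  [NormedAddCommGroup F] [NormedSpace 𝕜 F] [Nontrivial E] (e : E ≃L[𝕜] F)

theorem image_ball_subset (x : E) (r : ℝ) :
    e '' ball x r ⊆ ball (e x) (‖(e : E →L[𝕜] F)‖ * r) :=
  (e.lipschitz.mapsTo_ball (ne_of_gt e.norm_pos) x r).image_subset

theorem ball_subset_image_ball (x : E) (r : ℝ) :
    ball (e x) (r / ‖(e.symm : F →L[𝕜] E)‖) ⊆ e '' ball x r := by
  have h := e.symm.lipschitz.mapsTo_ball e.nnnorm_symm_pos.ne' (e x) (r / ‖(e.symm : F →L[𝕜] E)‖)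
  rw [e.symm_apply_apply, coe_nnnorm, mul_div_cancel₀ _ e.norm_symm_pos.ne'] at h
  rw [e.image_eq_preimage_symm]
  exact h

end ContinuousLinearEquiv

theorem MeasureTheory.Measure.addHaar_real_ball_mul {E : Type*} [NormedAddCommGroup E]
    [NormedSpace ℝ E] [MeasurableSpace E] [BorelSpace E] [FiniteDimensional ℝ E] [Nontrivial E]
    (μ : Measure E) [IsAddHaarMeasure μ] (x : E) {c : ℝ} (hc : 0 ≤ c) (r : ℝ) :
    μ.real (ball x (c * r)) = c ^ Module.finrank ℝ E * μ.real (ball x r) := by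
  rw [measureReal_def, measureReal_def, addHaar_ball_mul μ x hc, addHaar_ball_center μ x,
    ENNReal.toReal_mul, ENNReal.toReal_ofReal (by positivity)]

/-- If `b ∈ BMO^A(ℝⁿ)` and `z` is a critical point of `b`, then `A z` is also a critical
point of `b`.  A point `z` is critical if every neighborhood of `z` contains a ball on which
the average of `b` is arbitrarily large. -/
theorem BMOA_critical_point_invariant {n : ℕ}
    (A : EuclideanSpace ℝ (Fin n) ≃L[ℝ] EuclideanSpace ℝ (Fin n))
    (b : EuclideanSpace ℝ (Fin n) → ℝ) (hb : LocallyIntegrable b volume)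
    (M : ℝ) (hM : ∀ (x : EuclideanSpace ℝ (Fin n)) (R : ℝ), 0 < R →
      (⨍ y in ball x R, |b y - ⨍ z in ball x R, b z|) ≤ M)
    (C : ℝ) (hC : ∀ (x : EuclideanSpace ℝ (Fin n)) (R : ℝ), 0 < R →
      |(⨍ y in ball x R, b y) - ⨍ y in (⇑A '' ball x R), b y| ≤ C)
    (z : EuclideanSpace ℝ (Fin n))
    (hz : ∀ ε > (0 : ℝ), ∀ N : ℝ, ∃ (y : EuclideanSpace ℝ (Fin n)) (r : ℝ),
      0 < r ∧ ball y r ⊆ ball z ε ∧ N < ⨍ w in ball y r, b w) :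
    ∀ ε > (0 : ℝ), ∀ N : ℝ, ∃ (y : EuclideanSpace ℝ (Fin n)) (r : ℝ),
      0 < r ∧ ball y r ⊆ ball (A z) ε ∧ N < ⨍ w in ball y r, b w := by
  intro ε hε N
  rcases subsingleton_or_nontrivial (EuclideanSpace ℝ (Fin n)) with hE | hE
  · rw [Subsingleton.elim (A z) z]
    exact hz ε hε N
  set a := ‖(A : EuclideanSpace ℝ (Fin n) →L[ℝ] EuclideanSpace ℝ (Fin n))‖
  set a' := ‖(A.symm : EuclideanSpace ℝ (Fin n) →L[ℝ] EuclideanSpace ℝ (Fin n))‖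
  have ha : 0 < a := A.norm_pos
  have ha' : 0 < a' := A.norm_symm_pos
  obtain ⟨y, r, hr, hyz, hyN⟩ := hz (ε / a) (div_pos hε ha) (N + C + 2 * ((a * a') ^ n * M))
  have hinner := A.ball_subset_image_ball y r
  have houter := A.image_ball_subset y r
  refine ⟨A y, r / a', div_pos hr ha', hinner.trans ((image_mono hyz).trans ?_), ?_⟩
  · have h := A.image_ball_subset z (ε / a)
    rwa [mul_div_cancel₀ _ ha.ne'] at h
  have hvol : volume.real (ball (A y) (a * r)) =
      (a * a') ^ n * volume.real (ball (A y) (r / a')) := by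
    rw [show a * r = a * a' * (r / a') by field_simp,
      Measure.addHaar_real_ball_mul volume _ (by positivity), finrank_euclideanSpace_fin]
  have hcomp := abs_setAverage_sub_setAverage_le_of_subset_of_subset hinner houter
    measure_ball_lt_top.ne
    ((hb.integrableOn_isCompact (isCompact_closedBall _ _)).mono_set ball_subset_closedBall)
    (ENNReal.toReal_pos (measure_ball_pos _ _ (div_pos hr ha')).ne' measure_ball_lt_top.ne)
    hvol.le (hM _ _ (mul_pos ha hr))
  have hshift := hC y r hr
  rw [abs_le] at hcomp hshift
  linarith [hcomp.1, hshift.2]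
end

section
/- Let $\Phi \in \Delta_2 \cap \nabla_2$ be a Young function and $\phi \in \mathcal{G}^{dec}$. Then for any ball $B(x,R)$, $\|\chi_{B(x,R)}\|_{L(\Phi,\phi)} \sim \frac{1}{\Phi^{-1}(\phi(R))}$, with implicit constants independent of $x$ and $R$. -/
/-!
On a ball `B(z,r)` the Luxemburg condition for `χ = χ_{B(x,R)}` reads
`|B(z,r) ∩ B(x,R)| / |B(z,r)| · Φ(1/λ) ≤ φ(r)`. For `B(x,R)` itself this forces
`Φ(1/λ) ≤ φ(R)`, i.e. `λ ≥ 1/Φ⁻¹(φ(R))`. Conversely, `φ ∈ 𝒢^dec` gives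
`φ(R) |B(z,r) ∩ B(x,R)| ≲ φ(r) |B(z,r)|` (compare `φ` for `r ≤ R`, and `φ(t) t^n` together with
`|B(x,R)| ∼ R^n` for `r > R`), so `λ ∼ 1/Φ⁻¹(φ(R))` is admissible on every ball at once.
-/

open MeasureTheory Metric Set Filter Module

/-- Generalized inverse of a Young function. -/
noncomputable def phiInv (Φ : ℝ → ℝ) (v : ℝ) : ℝ :=
  sSup {u : ℝ | 0 ≤ u ∧ Φ u ≤ v}

/-- The local Orlicz–Morrey (Luxemburg-type) norm `‖f‖_{Φ,φ,B(x,R)}`. -/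
noncomputable def ballOrliczNorm {n : ℕ} (Φ φ : ℝ → ℝ)
    (f : EuclideanSpace ℝ (Fin n) → ℝ) (x : EuclideanSpace ℝ (Fin n)) (R : ℝ) : ℝ :=
  sInf {lam : ℝ | 0 < lam ∧ (1 / φ R) * ⨍ y in ball x R, Φ (|f y| / lam) ≤ 1}

/-- The Orlicz–Morrey norm `‖f‖_{L(Φ,φ)} = sup_B ‖f‖_{Φ,φ,B}`. -/
noncomputable def orliczMorreyNorm {n : ℕ} (Φ φ : ℝ → ℝ)
    (f : EuclideanSpace ℝ (Fin n) → ℝ) : ℝ :=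
  sSup {c : ℝ | ∃ (x : EuclideanSpace ℝ (Fin n)) (R : ℝ), 0 < R ∧
    c = ballOrliczNorm Φ φ f x R}

/-- Membership of `φ` in the paper's class `𝒢^dec` in dimension `d`, with constant `C`. -/
def IsGDec (d : ℕ) (C : ℝ) (φ : ℝ → ℝ) : Prop :=
  ∀ t₁ t₂ : ℝ, 0 < t₁ → t₁ < t₂ → φ t₂ ≤ C * φ t₁ ∧ φ t₁ * t₁ ^ d ≤ C * (φ t₂ * t₂ ^ d)

theorem IsGDec.mono {d : ℕ} {C C' : ℝ} {φ : ℝ → ℝ} (hG : IsGDec d C φ)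
    (hφ : ∀ t > 0, 0 ≤ φ t) (hCC' : C ≤ C') : IsGDec d C' φ := by
  intro t₁ t₂ ht₁ ht₁₂
  obtain ⟨h₁, h₂⟩ := hG t₁ t₂ ht₁ ht₁₂
  have ht₂ : 0 < t₂ := ht₁.trans ht₁₂
  exact ⟨h₁.trans (mul_le_mul_of_nonneg_right hCC' (hφ t₁ ht₁)),
    h₂.trans (mul_le_mul_of_nonneg_right hCC' (by have := hφ t₂ ht₂; positivity))⟩

section Young

variable {Φ : ℝ → ℝ}

theorem ConvexOn.map_mul_le_of_map_zero (hconv : ConvexOn ℝ (Ici 0) Φ) (h0 : Φ 0 = 0)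
    {a t : ℝ} (ha₀ : 0 ≤ a) (ha₁ : a ≤ 1) (ht : 0 ≤ t) : Φ (a * t) ≤ a * Φ t := by
  simpa [h0] using hconv.2 (mem_Ici.2 ht) self_mem_Ici ha₀ (sub_nonneg.2 ha₁) (by ring)

theorem ConvexOn.mul_map_div_le (hconv : ConvexOn ℝ (Ici 0) Φ) (h0 : Φ 0 = 0)
    {C t : ℝ} (hC : 1 ≤ C) (ht : 0 ≤ t) : C * Φ (t / C) ≤ Φ t := by
  have hC₀ : 0 < C := one_pos.trans_le hC
  have := hconv.map_mul_le_of_map_zero h0 (inv_nonneg.2 hC₀.le) (inv_le_one_of_one_le₀ hC) ht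
  rw [← inv_mul_eq_div]
  calc C * Φ (C⁻¹ * t) ≤ C * (C⁻¹ * Φ t) := mul_le_mul_of_nonneg_left this hC₀.le
    _ = Φ t := by field_simp

theorem le_phiInv (htop : Tendsto Φ atTop atTop) {u v : ℝ} (hu : 0 ≤ u) (hΦu : Φ u ≤ v) :
    u ≤ phiInv Φ v := by
  refine le_csSup ?_ ⟨hu, hΦu⟩
  obtain ⟨M, hM⟩ := (htop.eventually_gt_atTop v).exists_forall_of_atTop
  exact ⟨M, fun w hw => le_of_not_gt fun hMw => (hM w hMw.le).not_ge hw.2⟩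

theorem phiInv_pos (hconv : ConvexOn ℝ (Ici 0) Φ) (h0 : Φ 0 = 0)
    (htop : Tendsto Φ atTop atTop) {v : ℝ} (hv : 0 < v) : 0 < phiInv Φ v := by
  set a := v / (v + |Φ 1|)
  have hden : 0 < v + |Φ 1| := by positivity
  have ha₀ : 0 < a := by positivity
  have ha₁ : a ≤ 1 := (div_le_one hden).2 (le_add_of_nonneg_right (abs_nonneg _))
  have hΦa : Φ a ≤ v := by
    calc Φ a = Φ (a * 1) := by rw [mul_one]
      _ ≤ a * |Φ 1| :=
        (hconv.map_mul_le_of_map_zero h0 ha₀.le ha₁ zero_le_one).trans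
          (mul_le_mul_of_nonneg_left (le_abs_self _) ha₀.le)
      _ ≤ v := by
        rw [div_mul_eq_mul_div, div_le_iff₀ hden]
        nlinarith [abs_nonneg (Φ 1)]
  exact ha₀.trans_le (le_phiInv htop ha₀.le hΦa)

theorem map_phiInv_half_le (hmono : MonotoneOn Φ (Ici 0)) {v : ℝ} (hpos : 0 < phiInv Φ v) :
    Φ (phiInv Φ v / 2) ≤ v := by
  have hne : {u : ℝ | 0 ≤ u ∧ Φ u ≤ v}.Nonempty := by
    by_contra h
    simp [phiInv, not_nonempty_iff_eq_empty.1 h] at hpos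
  obtain ⟨u, ⟨hu₀, hΦu⟩, hu⟩ := exists_lt_of_lt_csSup hne (half_lt_self hpos)
  exact (hmono (mem_Ici.2 (by positivity)) (mem_Ici.2 hu₀) hu.le).trans hΦu

end Young

theorem setAverage_comp_indicator_one {α : Type*} [MeasurableSpace α] {μ : Measure α}
    {A : Set α} (hA : MeasurableSet A) (s : Set α) {Φ : ℝ → ℝ} (h0 : Φ 0 = 0) (lam : ℝ) :
    ⨍ y in s, Φ (|A.indicator (fun _ => (1 : ℝ)) y| / lam) ∂μ =
      μ.real (s ∩ A) / μ.real s * Φ (1 / lam) := by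
  have hfun : (fun y => Φ (|A.indicator (fun _ => (1 : ℝ)) y| / lam)) =
      A.indicator fun _ => Φ (1 / lam) := by
    ext y
    by_cases hy : y ∈ A <;> simp [hy, h0]
  rw [hfun, setAverage_eq, setIntegral_indicator hA, setIntegral_const, smul_eq_mul,
    smul_eq_mul]
  ring

theorem measureReal_ball_pos {X : Type*} [PseudoMetricSpace X] [ProperSpace X]
    [MeasurableSpace X] (μ : Measure X) [μ.IsOpenPosMeasure] [IsFiniteMeasureOnCompacts μ]
    (x : X) {r : ℝ} (hr : 0 < r) : 0 < μ.real (ball x r) :=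
  ENNReal.toReal_pos (measure_ball_pos μ x hr).ne' measure_ball_lt_top.ne

section Ball

variable {E : Type*} [NormedAddCommGroup E] [NormedSpace ℝ E] [MeasurableSpace E]
  [BorelSpace E] [FiniteDimensional ℝ E] (μ : Measure E) [μ.IsAddHaarMeasure]

theorem measureReal_ball_of_pos (x : E) {r : ℝ} (hr : 0 < r) :
    μ.real (ball x r) = r ^ finrank ℝ E * μ.real (ball 0 1) := by
  rw [measureReal_def, Measure.addHaar_ball_of_pos μ x hr, ENNReal.toReal_mul,
    ENNReal.toReal_ofReal (by positivity), measureReal_def]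

theorem IsGDec.mul_measureReal_ball_inter_le {C : ℝ} {φ : ℝ → ℝ}
    (hG : IsGDec (finrank ℝ E) C φ) (hC : 1 ≤ C) {R r : ℝ} (hφR : 0 ≤ φ R) (hR : 0 < R)
    (hr : 0 < r) (x z : E) :
    φ R * μ.real (ball z r ∩ ball x R) ≤ C * φ r * μ.real (ball z r) := by
  rcases le_or_gt r R with hrR | hRr
  · have hφ : φ R ≤ C * φ r := by
      rcases hrR.eq_or_lt with rfl | hlt
      · exact le_mul_of_one_le_left hφR hC
      · exact (hG r R hr hlt).1
    exact mul_le_mul hφ (measureReal_mono inter_subset_left) measureReal_nonneg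
      (hφR.trans hφ)
  · have hφ := (hG R r hR hRr).2
    have hc := measureReal_nonneg (μ := μ) (s := ball (0 : E) 1)
    calc φ R * μ.real (ball z r ∩ ball x R) ≤ φ R * μ.real (ball x R) :=
          mul_le_mul_of_nonneg_left (measureReal_mono inter_subset_right) hφR
      _ = φ R * R ^ finrank ℝ E * μ.real (ball 0 1) := by
          rw [measureReal_ball_of_pos μ x hR, mul_assoc]
      _ ≤ C * (φ r * r ^ finrank ℝ E) * μ.real (ball 0 1) :=
          mul_le_mul_of_nonneg_right hφ hc
      _ = C * φ r * μ.real (ball z r) := by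
          rw [measureReal_ball_of_pos μ z hr]; ring

end Ball

section OrliczMorrey

variable {n : ℕ} {Φ φ : ℝ → ℝ} {f : EuclideanSpace ℝ (Fin n) → ℝ}

theorem ballOrliczNorm_le {x : EuclideanSpace ℝ (Fin n)} {R lam : ℝ} (hlam : 0 < lam)
    (h : (1 / φ R) * ⨍ y in ball x R, Φ (|f y| / lam) ≤ 1) :
    ballOrliczNorm Φ φ f x R ≤ lam :=
  csInf_le ⟨0, fun _ hl => hl.1.le⟩ ⟨hlam, h⟩

theorem le_ballOrliczNorm {x : EuclideanSpace ℝ (Fin n)} {R a : ℝ}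
    (hne : ∃ lam, 0 < lam ∧ (1 / φ R) * ⨍ y in ball x R, Φ (|f y| / lam) ≤ 1)
    (h : ∀ lam, 0 < lam → (1 / φ R) * ⨍ y in ball x R, Φ (|f y| / lam) ≤ 1 → a ≤ lam) :
    a ≤ ballOrliczNorm Φ φ f x R :=
  le_csInf hne fun lam hlam => h lam hlam.1 hlam.2

theorem orliczMorreyNorm_le {M : ℝ}
    (h : ∀ x R, 0 < R → ballOrliczNorm Φ φ f x R ≤ M) : orliczMorreyNorm Φ φ f ≤ M :=
  csSup_le ⟨_, 0, 1, one_pos, rfl⟩ fun _ ⟨x, R, hR, hc⟩ => hc ▸ h x R hR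

theorem ballOrliczNorm_le_orliczMorreyNorm {M : ℝ}
    (h : ∀ x R, 0 < R → ballOrliczNorm Φ φ f x R ≤ M) {x : EuclideanSpace ℝ (Fin n)}
    {R : ℝ} (hR : 0 < R) : ballOrliczNorm Φ φ f x R ≤ orliczMorreyNorm Φ φ f :=
  le_csSup ⟨M, fun _ ⟨z, r, hr, hc⟩ => hc ▸ h z r hr⟩ ⟨x, R, hR, rfl⟩

theorem admissible_indicator_ball {C : ℝ} (hG : IsGDec n C φ) (hC : 1 ≤ C) (h0 : Φ 0 = 0)
    (hφ : ∀ t > 0, 0 < φ t) {x z : EuclideanSpace ℝ (Fin n)} {R r lam : ℝ} (hR : 0 < R)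
    (hr : 0 < r) (hlam : C * Φ (1 / lam) ≤ φ R) :
    (1 / φ r) * ⨍ y in ball z r, Φ (|(ball x R).indicator (fun _ => (1 : ℝ)) y| / lam) ≤ 1 := by
  rw [setAverage_comp_indicator_one measurableSet_ball _ h0]
  set I := volume.real (ball z r ∩ ball x R)
  set V := volume.real (ball z r)
  have hV : 0 < V := measureReal_ball_pos volume z hr
  have hball : φ R * I ≤ C * φ r * V := by
    refine IsGDec.mul_measureReal_ball_inter_le volume ?_ hC (hφ R hR).le hR hr x z
    rwa [finrank_euclideanSpace_fin]
  have hIΦ : I * Φ (1 / lam) ≤ φ r * V := by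
    refine le_of_mul_le_mul_left ?_ (one_pos.trans_le hC)
    calc C * (I * Φ (1 / lam)) = I * (C * Φ (1 / lam)) := by ring
      _ ≤ I * φ R := mul_le_mul_of_nonneg_left hlam measureReal_nonneg
      _ ≤ C * φ r * V := by rw [mul_comm]; exact hball
      _ = C * (φ r * V) := by ring
  calc 1 / φ r * (I / V * Φ (1 / lam)) = I * Φ (1 / lam) / (φ r * V) := by
        field_simp
    _ ≤ 1 := div_le_one_of_le₀ hIΦ (mul_pos (hφ r hr) hV).le

theorem inv_phiInv_le_of_admissible (h0 : Φ 0 = 0) (htop : Tendsto Φ atTop atTop)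
    {x : EuclideanSpace ℝ (Fin n)} {R lam : ℝ} (hR : 0 < R) (hφR : 0 < φ R) (hlam : 0 < lam)
    (h : (1 / φ R) * ⨍ y in ball x R, Φ (|(ball x R).indicator (fun _ => (1 : ℝ)) y| / lam)
      ≤ 1) :
    (phiInv Φ (φ R))⁻¹ ≤ lam := by
  have hV : volume.real (ball x R) ≠ 0 := (measureReal_ball_pos volume x hR).ne'
  rw [setAverage_comp_indicator_one measurableSet_ball _ h0, inter_self, div_self hV, one_mul,
    one_div, inv_mul_le_iff₀ hφR, mul_one] at h
  exact inv_le_of_inv_le₀ hlam (one_div lam ▸ le_phiInv htop (by positivity) h)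

end OrliczMorrey

theorem indicator_orliczMorrey_norm_general {n : ℕ} (Φ φ : ℝ → ℝ)
    (hconv : ConvexOn ℝ (Ici 0) Φ) (hmono : MonotoneOn Φ (Ici 0))
    (h0 : Φ 0 = 0) (htop : Tendsto Φ atTop atTop)
    (hφpos : ∀ t > (0 : ℝ), 0 < φ t)
    (hφdec : ∃ C > (0 : ℝ), ∀ t₁ t₂ : ℝ, 0 < t₁ → t₁ < t₂ →
      φ t₂ ≤ C * φ t₁ ∧ φ t₁ * t₁ ^ n ≤ C * (φ t₂ * t₂ ^ n)) :
    ∃ c₁ > (0 : ℝ), ∃ c₂ > (0 : ℝ), ∀ (x : EuclideanSpace ℝ (Fin n)) (R : ℝ), 0 < R →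
      c₁ * (phiInv Φ (φ R))⁻¹ ≤
        orliczMorreyNorm Φ φ ((ball x R).indicator fun _ => (1 : ℝ)) ∧
      orliczMorreyNorm Φ φ ((ball x R).indicator fun _ => (1 : ℝ)) ≤
        c₂ * (phiInv Φ (φ R))⁻¹ := by
  obtain ⟨C₀, -, hG₀⟩ := hφdec
  set C := max C₀ 1
  have hC : 1 ≤ C := le_max_right _ _
  have hG : IsGDec n C φ := IsGDec.mono hG₀ (fun t ht => (hφpos t ht).le) (le_max_left _ _)
  refine ⟨1, one_pos, 2 * C, by positivity, fun x R hR => ?_⟩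
  set u := phiInv Φ (φ R)
  have hu : 0 < u := phiInv_pos hconv h0 htop (hφpos R hR)
  -- `Φ (Φ⁻¹ v / 2) ≤ v` needs no continuity of `Φ`; this is where the factor `2` comes from
  have hlam : C * Φ (1 / (2 * C / u)) ≤ φ R := by
    rw [one_div_div, ← div_div]
    exact (hconv.mul_map_div_le h0 hC (by positivity)).trans (map_phiInv_half_le hmono hu)
  have hadm : ∀ z r, 0 < r → (1 / φ r) *
      ⨍ y in ball z r, Φ (|(ball x R).indicator (fun _ => (1 : ℝ)) y| / (2 * C / u)) ≤ 1 :=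
    fun z r hr => admissible_indicator_ball hG hC h0 hφpos hR hr hlam
  have hball : ∀ z r, 0 < r → ballOrliczNorm Φ φ ((ball x R).indicator fun _ => (1 : ℝ)) z r
      ≤ 2 * C / u := fun z r hr => ballOrliczNorm_le (by positivity) (hadm z r hr)
  constructor
  · rw [one_mul]
    exact (le_ballOrliczNorm ⟨_, by positivity, hadm x R hR⟩ fun lam hlam h =>
      inv_phiInv_le_of_admissible h0 htop hR (hφpos R hR) hlam h).trans
        (ballOrliczNorm_le_orliczMorreyNorm hball hR)
  · rw [← div_eq_mul_inv]
    exact orliczMorreyNorm_le hball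

/-- For `Φ ∈ Δ₂ ∩ ∇₂` and `φ ∈ 𝒢^dec`,
`‖χ_{B(x,R)}‖_{L(Φ,φ)} ∼ 1 / Φ⁻¹(φ(R))`. -/
theorem indicator_orliczMorrey_norm {n : ℕ} (hn : 1 ≤ n) (Φ φ : ℝ → ℝ)
    (hconv : ConvexOn ℝ (Ici 0) Φ) (hmono : MonotoneOn Φ (Ici 0))
    (h0 : Φ 0 = 0) (htop : Tendsto Φ atTop atTop)
    (hdelta : ∃ C > (0 : ℝ), ∀ t > (0 : ℝ), Φ (2 * t) ≤ C * Φ t)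
    (hnabla : ∃ K > (1 : ℝ), ∀ t > (0 : ℝ), Φ t ≤ Φ (K * t) / (2 * K))
    (hφpos : ∀ t > (0 : ℝ), 0 < φ t)
    (hφdec : ∃ C > (0 : ℝ), ∀ t₁ t₂ : ℝ, 0 < t₁ → t₁ < t₂ →
      φ t₂ ≤ C * φ t₁ ∧ φ t₁ * t₁ ^ n ≤ C * (φ t₂ * t₂ ^ n)) :
    ∃ c₁ > (0 : ℝ), ∃ c₂ > (0 : ℝ), ∀ (x : EuclideanSpace ℝ (Fin n)) (R : ℝ), 0 < R →
      c₁ * (phiInv Φ (φ R))⁻¹ ≤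
        orliczMorreyNorm Φ φ ((ball x R).indicator fun _ => (1 : ℝ)) ∧
      orliczMorreyNorm Φ φ ((ball x R).indicator fun _ => (1 : ℝ)) ≤
        c₂ * (phiInv Φ (φ R))⁻¹ :=
  indicator_orliczMorrey_norm_general Φ φ hconv hmono h0 htop hφpos hφdec
end

section
/- Let $\psi : (0,\infty) \to (0,\infty)$ satisfy $\int_R^\infty \frac{\psi(t)}{t^2}\,dt \lesssim \frac{\psi(R)}{R}$ for all $R > 0$, and let $b \in C_c^\infty(\mathbb{R}^n)$. Then there exists $0 < \theta < 1$ such that $|b(x) - b(y)| \lesssim \|\nabla b\|_{L^\infty} |x-y|^\theta \psi(|x-y|)$ for all $x, y \in \mathbb{R}^n$ with $|x-y| < 1$. -/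
open MeasureTheory Metric Set Filter

lemma Fstep' (ψ : ℝ → ℝ) (c : ℝ) (hc : 0 < c)
    (hψpos : ∀ t > (0 : ℝ), 0 < ψ t)
    (hint : ∀ R > (0 : ℝ), IntegrableOn (fun t => ψ t / t ^ 2) (Ioi R) volume ∧
      (∫ t in Ioi R, ψ t / t ^ 2) ≤ c * ψ R / R)
    {R S : ℝ} (hR : 0 < R) (hRS : R ≤ S) :
    (∫ t in Ioi S, ψ t / t ^ 2) * (1 + Real.log (S / R) / c)
      ≤ ∫ t in Ioi R, ψ t / t ^ 2 := by
  have hS : 0 < S := hR.trans_le hRS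
  set F : ℝ → ℝ := fun R => ∫ t in Ioi R, ψ t / t ^ 2 with hF
  have hanti : ∀ ⦃A B : ℝ⦄, 0 < A → A ≤ B → F B ≤ F A := by
    intro A B hA hAB
    have hsplit : F A = (∫ t in Ioc A B, ψ t / t ^ 2) + F B := by
      rw [hF]
      rw [← setIntegral_union (Ioc_disjoint_Ioi le_rfl) measurableSet_Ioi
        (((hint A hA).1).mono_set Ioc_subset_Ioi_self) ((hint B (hA.trans_le hAB)).1)]
      rw [Ioc_union_Ioi_eq_Ioi hAB]
    have hnn : 0 ≤ ∫ t in Ioc A B, ψ t / t ^ 2 := by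
      apply setIntegral_nonneg measurableSet_Ioc
      intro t ht
      have ht0 : 0 < t := hA.trans ht.1
      exact le_of_lt (div_pos (hψpos t ht0) (by positivity))
    linarith [hsplit]
  have hFS0 : 0 ≤ F S := by
    apply setIntegral_nonneg measurableSet_Ioi
    intro t ht
    have ht0 : 0 < t := hS.trans ht
    exact le_of_lt (div_pos (hψpos t ht0) (by positivity))
  have hsplit : F R = (∫ t in Ioc R S, ψ t / t ^ 2) + F S := by
    rw [hF]
    rw [← setIntegral_union (Ioc_disjoint_Ioi le_rfl) measurableSet_Ioi
      (((hint R hR).1).mono_set Ioc_subset_Ioi_self) ((hint S hS).1)]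
    rw [Ioc_union_Ioi_eq_Ioi hRS]
  have hpt : ∀ t ∈ Ioc R S, F S / c * (1 / t) ≤ ψ t / t ^ 2 := by
    intro t ht
    have ht0 : 0 < t := hR.trans ht.1
    have h1 : F S ≤ F t := hanti ht0 ht.2
    have h2 : F t ≤ c * ψ t / t := (hint t ht0).2
    have h3 : F S / c ≤ ψ t / t := by
      rw [div_le_iff₀ hc]
      calc F S ≤ F t := h1
        _ ≤ c * ψ t / t := h2
        _ = ψ t / t * c := by ring
    calc F S / c * (1 / t) ≤ (ψ t / t) * (1 / t) := by
          apply mul_le_mul_of_nonneg_right h3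
          positivity
      _ = ψ t / t ^ 2 := by rw [div_mul_div_comm, mul_one, ← sq]
  have hconst : IntegrableOn (fun t => F S / c * (1 / t)) (Ioc R S) volume := by
    apply (ContinuousOn.integrableOn_Icc ?_).mono_set Ioc_subset_Icc_self
    apply ContinuousOn.mul continuousOn_const
    apply ContinuousOn.div continuousOn_const continuousOn_id
    intro t ht
    exact ne_of_gt (lt_of_lt_of_le hR ht.1)
  have hmono : (∫ t in Ioc R S, F S / c * (1 / t)) ≤ ∫ t in Ioc R S, ψ t / t ^ 2 :=
    setIntegral_mono_on hconst (((hint R hR).1).mono_set Ioc_subset_Ioi_self)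
      measurableSet_Ioc hpt
  have h0 : (0 : ℝ) ∉ uIcc R S := by
    intro h
    rcases mem_uIcc.mp h with h | h <;> linarith [h.1, h.2]
  have hval : (∫ t in Ioc R S, F S / c * (1 / t)) = F S / c * Real.log (S / R) := by
    rw [← intervalIntegral.integral_of_le hRS, intervalIntegral.integral_const_mul,
      integral_one_div h0]
  have hkey : F S / c * Real.log (S / R) ≤ ∫ t in Ioc R S, ψ t / t ^ 2 := hval ▸ hmono
  have heq : F S * (1 + Real.log (S / R) / c) = F S + F S / c * Real.log (S / R) := by ring
  rw [heq]
  linarith [hsplit]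


/-- If `∫_R^∞ ψ(t)/t² dt ≲ ψ(R)/R`, then every `b ∈ C_c^∞(ℝⁿ)` satisfies
`|b(x) - b(y)| ≲ ‖∇b‖_∞ |x-y|^θ ψ(|x-y|)` for `|x-y| < 1`, for some `0 < θ < 1`. -/
theorem smooth_compact_support_holder_psi {n : ℕ} (ψ : ℝ → ℝ)
    (hψpos : ∀ t > (0 : ℝ), 0 < ψ t)
    (hψ : ∃ c > (0 : ℝ), ∀ R > (0 : ℝ),
      IntegrableOn (fun t => ψ t / t ^ 2) (Ioi R) volume ∧
      (∫ t in Ioi R, ψ t / t ^ 2) ≤ c * ψ R / R) :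
    ∃ θ : ℝ, 0 < θ ∧ θ < 1 ∧ ∃ C > (0 : ℝ),
      ∀ b : EuclideanSpace ℝ (Fin n) → ℝ, ContDiff ℝ (⊤ : ℕ∞) b → HasCompactSupport b →
      ∀ x y : EuclideanSpace ℝ (Fin n), dist x y < 1 →
        |b x - b y| ≤ C * (⨆ z, ‖fderiv ℝ b z‖) * dist x y ^ θ * ψ (dist x y) := by
  obtain ⟨c, hc, hint⟩ := hψ
  set F : ℝ → ℝ := fun R => ∫ t in Ioi R, ψ t / t ^ 2 with hF
  -- F 1 > 0
  have hF1 : 0 < F 1 := by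
    rw [hF]
    have hnn : 0 ≤ᵐ[volume.restrict (Ioi (1:ℝ))] fun t => ψ t / t ^ 2 := by
      filter_upwards [ae_restrict_mem measurableSet_Ioi] with t ht
      have ht0 : (0:ℝ) < t := lt_trans one_pos ht
      exact le_of_lt (div_pos (hψpos t ht0) (by positivity))
    rw [setIntegral_pos_iff_support_of_nonneg_ae hnn (hint 1 one_pos).1]
    have hsub : Ioi (1:ℝ) ⊆ Function.support (fun t => ψ t / t ^ 2) ∩ Ioi 1 := by
      intro t ht
      refine ⟨?_, ht⟩
      have ht0 : (0:ℝ) < t := lt_trans one_pos ht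
      exact ne_of_gt (div_pos (hψpos t ht0) (by positivity))
    calc (0:ENNReal) < volume (Ioi (1:ℝ)) := by simp [Real.volume_Ioi]
      _ ≤ _ := measure_mono hsub
  have hanti : ∀ ⦃A B : ℝ⦄, 0 < A → A ≤ B → F B ≤ F A := by
    intro A B hA hAB
    have := Fstep' ψ c hc hψpos hint hA hAB
    have hFB0 : 0 ≤ F B := by
      apply setIntegral_nonneg measurableSet_Ioi
      intro t ht
      have ht0 : (0:ℝ) < t := (hA.trans_le hAB).trans ht
      exact le_of_lt (div_pos (hψpos t ht0) (by positivity))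
    have hlog : 0 ≤ Real.log (B / A) := by
      apply Real.log_nonneg
      rw [le_div_iff₀ hA]; linarith
    nlinarith [this, mul_nonneg hFB0 (div_nonneg hlog hc.le)]
  -- iteration
  set q : ℝ := 1 + 1 / c with hq
  have hq1 : 1 < q := by rw [hq]; have := one_div_pos.mpr hc; linarith
  have hiter : ∀ k : ℕ, q ^ k * F 1 ≤ F (Real.exp (-(k : ℝ))) := by
    intro k
    induction k with
    | zero => simp
    | succ k ih =>
      push_cast
      have hstep := Fstep' ψ c hc hψpos hint
        (R := Real.exp (-((k:ℝ)+1))) (S := Real.exp (-(k:ℝ)))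
        (Real.exp_pos _) (Real.exp_le_exp.mpr (by linarith))
      have hlog : Real.log (Real.exp (-(k:ℝ)) / Real.exp (-((k:ℝ)+1))) = 1 := by
        rw [← Real.exp_sub, Real.log_exp]; ring
      rw [hlog] at hstep
      have hFk0 : 0 ≤ F (Real.exp (-(k:ℝ))) := by
        apply setIntegral_nonneg measurableSet_Ioi
        intro t ht
        have ht0 : (0:ℝ) < t := (Real.exp_pos _).trans ht
        exact le_of_lt (div_pos (hψpos t ht0) (by positivity))
      have hq0 : 0 ≤ q := by linarith
      calc q ^ (k+1) * F 1 = q * (q ^ k * F 1) := by ring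
        _ ≤ q * F (Real.exp (-(k:ℝ))) := by
            apply mul_le_mul_of_nonneg_left ih hq0
        _ = F (Real.exp (-(k:ℝ))) * (1 + 1 / c) := by rw [hq]; ring
        _ ≤ F (Real.exp (-((k:ℝ)+1))) := hstep
  set a : ℝ := Real.log q with ha
  have ha0 : 0 < a := Real.log_pos hq1
  -- lower bound for ψ on (0,1)
  have hlow : ∀ d : ℝ, 0 < d → d < 1 →
      F 1 * Real.exp (-a) / c * d ^ (1 - a) ≤ ψ d := by
    intro d hd0 hd1
    have hld : 0 < -Real.log d := by
      have : Real.log d < 0 := Real.log_neg hd0 hd1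
      linarith
    set k : ℕ := ⌊-Real.log d⌋₊ with hk
    have hk1 : (k : ℝ) ≤ -Real.log d := Nat.floor_le hld.le
    have hk2 : -Real.log d < (k : ℝ) + 1 := Nat.lt_floor_add_one _
    have hdk : d ≤ Real.exp (-(k : ℝ)) := by
      rw [← Real.exp_log hd0]
      exact Real.exp_le_exp.mpr (by linarith)
    have h1 : q ^ k * F 1 ≤ F d := le_trans (hiter k) (hanti hd0 hdk)
    -- q ^ k = exp (k * a) ≥ exp ((-log d - 1) * a) = d^(-a) * exp (-a)
    have hqk : q ^ k = Real.exp ((k : ℝ) * a) := by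
      rw [← Real.exp_log (by linarith : (0:ℝ) < q), ← Real.exp_nat_mul]
    have h2 : Real.exp (-a) * d ^ (-a) ≤ q ^ k := by
      rw [hqk]
      have : d ^ (-a) = Real.exp (Real.log d * (-a)) := Real.rpow_def_of_pos hd0 _
      rw [this, ← Real.exp_add]
      apply Real.exp_le_exp.mpr
      nlinarith [ha0]
    have hFd : Real.exp (-a) * d ^ (-a) * F 1 ≤ F d := by
      calc Real.exp (-a) * d ^ (-a) * F 1 ≤ q ^ k * F 1 :=
            mul_le_mul_of_nonneg_right h2 hF1.le
        _ ≤ F d := h1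
    -- ψ d ≥ d * F d / c
    have hψd : F d * d / c ≤ ψ d := by
      have h2 : F d ≤ c * ψ d / d := (hint d hd0).2
      rw [div_le_iff₀ hc]
      calc F d * d ≤ (c * ψ d / d) * d := mul_le_mul_of_nonneg_right h2 hd0.le
        _ = ψ d * c := by field_simp
    calc F 1 * Real.exp (-a) / c * d ^ (1 - a)
        = (Real.exp (-a) * d ^ (-a) * F 1) * d / c := by
          rw [show (1:ℝ) - a = -a + 1 by ring, Real.rpow_add hd0, Real.rpow_one]
          ring
      _ ≤ F d * d / c := by
          apply div_le_div_of_nonneg_right ?_ hc.le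
          exact mul_le_mul_of_nonneg_right hFd hd0.le
      _ ≤ ψ d := hψd
  -- pick θ and C
  set θ : ℝ := min a 1 / 2 with hθ
  have hθ0 : 0 < θ := by
    rw [hθ]; positivity
  have hθ1 : θ < 1 := by
    rw [hθ]
    have : min a 1 ≤ 1 := min_le_right _ _
    linarith
  have hθa : θ ≤ a := by
    rw [hθ]
    have : min a 1 ≤ a := min_le_left _ _
    linarith [min_le_left a 1, (le_min_iff.mp (le_refl (min a 1))).1]
  set K : ℝ := F 1 * Real.exp (-a) / c with hK
  have hK0 : 0 < K := by
    rw [hK]; positivity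
  refine ⟨θ, hθ0, hθ1, K⁻¹, inv_pos.mpr hK0, ?_⟩
  intro b hb hbsupp x y hxy
  set L : ℝ := ⨆ z, ‖fderiv ℝ b z‖ with hL
  obtain ⟨M, hM⟩ := (hbsupp.fderiv ℝ).exists_bound_of_continuous (hb.continuous_fderiv (by simp))
  have hbdd : BddAbove (range fun z => ‖fderiv ℝ b z‖) := by
    refine ⟨M, ?_⟩
    rintro _ ⟨z, rfl⟩
    exact hM z
  have hL0 : 0 ≤ L := le_trans (norm_nonneg (fderiv ℝ b 0)) (le_ciSup hbdd 0)
  have hlip : |b x - b y| ≤ L * dist x y := by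
    have := Convex.norm_image_sub_le_of_norm_fderiv_le
      (f := b) (C := L) (s := univ)
      (fun z _ => (hb.differentiable (by simp)).differentiableAt)
      (fun z _ => le_ciSup hbdd z) convex_univ (mem_univ y) (mem_univ x)
    rwa [Real.norm_eq_abs, ← dist_eq_norm] at this
  rcases eq_or_lt_of_le (dist_nonneg (x := x) (y := y)) with hd | hd
  · rw [← hd, Real.zero_rpow (ne_of_gt hθ0)]
    have : x = y := by rwa [eq_comm, dist_eq_zero] at hd
    simp [this]
  · -- 0 < d < 1
    set d := dist x y with hdd
    have hkey : d ≤ K⁻¹ * d ^ θ * ψ d := by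
      have hψlb := hlow d hd hxy
      have hsplit : d = d ^ θ * d ^ (1 - θ) := by
        rw [← Real.rpow_add hd, show θ + (1 - θ) = (1:ℝ) by ring, Real.rpow_one]
      have h1θ : d ^ (1 - θ) ≤ K⁻¹ * ψ d := by
        have e1 : d ^ ((1:ℝ) - θ) = d ^ ((1:ℝ) - a) * d ^ (a - θ) := by
          rw [← Real.rpow_add hd]; congr 1; ring
        have e2 : d ^ (a - θ) ≤ 1 :=
          Real.rpow_le_one hd.le hxy.le (by linarith)
        have e3 : d ^ ((1:ℝ) - a) ≤ K⁻¹ * ψ d := by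
          rw [inv_mul_eq_div, le_div_iff₀ hK0]
          linarith [hψlb, mul_comm K (d ^ ((1:ℝ) - a))]
        calc d ^ ((1:ℝ) - θ) = d ^ ((1:ℝ) - a) * d ^ (a - θ) := e1
          _ ≤ d ^ ((1:ℝ) - a) * 1 := by
              apply mul_le_mul_of_nonneg_left e2 (Real.rpow_nonneg hd.le _)
          _ = d ^ ((1:ℝ) - a) := mul_one _
          _ ≤ K⁻¹ * ψ d := e3
      calc d = d ^ θ * d ^ (1 - θ) := hsplit
        _ ≤ d ^ θ * (K⁻¹ * ψ d) := by
            apply mul_le_mul_of_nonneg_left h1θ (Real.rpow_nonneg hd.le _)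
        _ = K⁻¹ * d ^ θ * ψ d := by ring
    calc |b x - b y| ≤ L * d := hlip
      _ ≤ L * (K⁻¹ * d ^ θ * ψ d) := mul_le_mul_of_nonneg_left hkey hL0
      _ = K⁻¹ * L * d ^ θ * ψ d := by ring
end
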